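/- arXiv:2508.10722 — 3 statements merged into one kernel-verified Lean document; each statement's English description precedes it below -/
import Mathlib

section
/- Let a < b and Σ ⊆ [a,b] with a, b ∈ Σ and Leb([a,b] \ Σ) = 0. Let g : [a,b] → [0,∞] be Lebesgue measurable with ∫_a^b g < ∞, and fix σ ∈ {0,1} and ε ∈ (0,1). Then there exists a partition a = t_0 < t_1 < … < t_n = b with all t_i ∈ Σ, max_i |t_i − t_{i−1}| < ε, and |Σ_{i=1}^n g(t_{i−σ})(t_i − t_{i−1}) − ∫_a^b g(t) dt| < ε. -/
/-!
Approximate `g` in `L¹(a, b)` by a continuous `φ`. Riemann sums of `φ` over any partition of small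
mesh are close to `∫ φ`, so it remains to control `∑ |g - φ|(tᵢ) (tᵢ₊₁ - tᵢ)`. Take the points of
a uniform grid of step `h` shifted by `s ∈ (0, h)`, and add `a` and `b`. Averaged over the shift,
`h ∑ⱼ |g - φ|(a + s + j h)` is exactly `∫_a^b |g - φ|`, while translates of the null set
`[a, b] \ S` are null; hence some shift puts every grid point in `S` and makes this sum at most
the average. The endpoints only add `h (|g - φ|(a) + |g - φ|(b))`, which vanishes with `h`.
-/

open MeasureTheory Set

lemma tag_mem_Icc {t : ℕ → ℝ} {σ i : ℕ} (hσ : σ = 0 ∨ σ = 1) (hi : t i ≤ t (i + 1)) :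
    t (i + 1 - σ) ∈ Icc (t i) (t (i + 1)) := by
  rcases hσ with rfl | rfl <;> simp [hi]

lemma sum_range_tag_le {σ : ℕ} (hσ : σ = 0 ∨ σ = 1) {F : ℕ → ℝ} (hF : ∀ i, 0 ≤ F i) (n : ℕ) :
    ∑ i ∈ Finset.range n, F (i + 1 - σ) ≤ ∑ i ∈ Finset.range (n + 1), F i := by
  rcases hσ with rfl | rfl
  · simpa [Finset.sum_range_succ'] using hF 0
  · simpa [Finset.sum_range_succ] using hF n

theorem abs_sum_mul_sub_integral_le_of_oscillation {φ : ℝ → ℝ} {t τ : ℕ → ℝ} {n : ℕ} {η : ℝ}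
    (hφ : ∀ i < n, IntervalIntegrable φ volume (t i) (t (i + 1)))
    (ht : ∀ i < n, t i ≤ t (i + 1))
    (hosc : ∀ i < n, ∀ x ∈ Ioc (t i) (t (i + 1)), |φ (τ i) - φ x| ≤ η) :
    |∑ i ∈ Finset.range n, φ (τ i) * (t (i + 1) - t i) - ∫ x in t 0..t n, φ x|
      ≤ η * (t n - t 0) := by
  rw [← intervalIntegral.sum_integral_adjacent_intervals hφ, ← Finset.sum_sub_distrib,
    ← Finset.sum_range_sub, Finset.mul_sum]
  refine (Finset.abs_sum_le_sum_abs _ _).trans (Finset.sum_le_sum fun i hi => ?_)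
  rw [Finset.mem_range] at hi
  have hconst : φ (τ i) * (t (i + 1) - t i) = ∫ _ in t i..t (i + 1), φ (τ i) := by
    simp [mul_comm]
  rw [hconst, ← intervalIntegral.integral_sub intervalIntegrable_const (hφ i hi),
    ← abs_of_nonneg (sub_nonneg.2 (ht i hi))]
  refine intervalIntegral.norm_integral_le_of_norm_le_const (E := ℝ) fun x hx => ?_
  rw [uIoc_of_le (ht i hi)] at hx
  exact hosc i hi x hx

theorem abs_riemannSum_sub_integral_le {g φ : ℝ → ℝ} {t : ℕ → ℝ} {n σ : ℕ} {h η : ℝ}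
    (hσ : σ = 0 ∨ σ = 1) (hh : 0 ≤ h) (ht : MonotoneOn t (Iic n))
    (hmesh : ∀ i < n, t (i + 1) - t i ≤ h)
    (hg : IntervalIntegrable g volume (t 0) (t n)) (hφ : Continuous φ)
    (hosc : ∀ x y, |x - y| ≤ h → |φ x - φ y| ≤ η) :
    |∑ i ∈ Finset.range n, g (t (i + 1 - σ)) * (t (i + 1) - t i) - ∫ x in t 0..t n, g x|
      ≤ h * ∑ i ∈ Finset.range (n + 1), |g (t i) - φ (t i)| + η * (t n - t 0)
        + ∫ x in t 0..t n, |g x - φ x| := by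
  have hstep : ∀ i < n, t i ≤ t (i + 1) := fun i hi =>
    ht (mem_Iic.2 (by omega)) (mem_Iic.2 (by omega)) (by omega)
  have htag : ∀ i < n, t (i + 1 - σ) ∈ Icc (t i) (t (i + 1)) := fun i hi =>
    tag_mem_Icc hσ (hstep i hi)
  set Rg := ∑ i ∈ Finset.range n, g (t (i + 1 - σ)) * (t (i + 1) - t i)
  set Rφ := ∑ i ∈ Finset.range n, φ (t (i + 1 - σ)) * (t (i + 1) - t i)
  set Ig := ∫ x in t 0..t n, g x
  set Iφ := ∫ x in t 0..t n, φ x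
  have hsample : |Rg - Rφ| ≤ h * ∑ i ∈ Finset.range (n + 1), |g (t i) - φ (t i)| := calc
    _ ≤ ∑ i ∈ Finset.range n, h * |g (t (i + 1 - σ)) - φ (t (i + 1 - σ))| := by
      rw [← Finset.sum_sub_distrib]
      refine (Finset.abs_sum_le_sum_abs _ _).trans (Finset.sum_le_sum fun i hi => ?_)
      rw [Finset.mem_range] at hi
      rw [← sub_mul, abs_mul, abs_of_nonneg (sub_nonneg.2 (hstep i hi)), mul_comm]
      exact mul_le_mul_of_nonneg_right (hmesh i hi) (abs_nonneg _)
    _ ≤ _ := by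
      rw [← Finset.mul_sum]
      exact mul_le_mul_of_nonneg_left
        (sum_range_tag_le (F := fun i => |g (t i) - φ (t i)|) hσ (fun i => abs_nonneg _) n) hh
  have hriemann : |Rφ - Iφ| ≤ η * (t n - t 0) :=
    abs_sum_mul_sub_integral_le_of_oscillation (fun i _ => hφ.intervalIntegrable _ _) hstep
      fun i hi x hx => hosc _ _ <| abs_sub_le_iff.2
        ⟨by linarith [(htag i hi).2, hx.1, hmesh i hi],
          by linarith [(htag i hi).1, hx.2, hmesh i hi]⟩
  have happrox : |Iφ - Ig| ≤ ∫ x in t 0..t n, |g x - φ x| := by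
    rw [abs_sub_comm, ← intervalIntegral.integral_sub hg (hφ.intervalIntegrable _ _)]
    exact intervalIntegral.abs_integral_le_integral_abs (ht (by simp) (by simp) (Nat.zero_le n))
  calc |Rg - Ig| ≤ |Rg - Rφ| + (|Rφ - Iφ| + |Iφ - Ig|) :=
        (abs_sub_le _ _ _).trans (add_le_add_right (abs_sub_le _ _ _) _)
    _ ≤ _ := by linarith

section ShiftedGridAverage

variable {ψ : ℝ → ℝ} {x₀ h : ℝ} {K : ℕ}

lemma IntervalIntegrable.grid_cell (hψ : IntervalIntegrable ψ volume x₀ (x₀ + K * h))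
    (hh : 0 ≤ h) {j : ℕ} (hj : j < K) :
    IntervalIntegrable ψ volume (x₀ + j * h) (x₀ + (j + 1 : ℕ) * h) := by
  have hjK : ((j : ℝ) + 1) ≤ K := by exact_mod_cast hj
  refine hψ.mono_set (uIcc_subset_uIcc ?_ ?_) <;> rw [mem_uIcc] <;> left <;> push_cast <;>
    constructor <;> nlinarith

lemma IntervalIntegrable.comp_add_grid_cell (hψ : IntervalIntegrable ψ volume x₀ (x₀ + K * h))
    (hh : 0 ≤ h) {j : ℕ} (hj : j < K) :
    IntervalIntegrable (fun s => ψ (s + (x₀ + j * h))) volume 0 h := by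
  simpa [add_mul, ← add_assoc] using (hψ.grid_cell hh hj).comp_add_right (x₀ + j * h)

lemma integral_sum_comp_add_grid (hψ : IntervalIntegrable ψ volume x₀ (x₀ + K * h))
    (hh : 0 ≤ h) :
    ∫ s in (0 : ℝ)..h, ∑ j ∈ Finset.range K, ψ (s + (x₀ + j * h))
      = ∫ x in x₀..x₀ + K * h, ψ x := by
  rw [intervalIntegral.integral_finsetSum fun j hj =>
    hψ.comp_add_grid_cell hh (Finset.mem_range.1 hj)]
  have hcell (j : ℕ) : ∫ s in (0 : ℝ)..h, ψ (s + (x₀ + j * h))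
      = ∫ x in x₀ + j * h..x₀ + (j + 1 : ℕ) * h, ψ x := by
    rw [intervalIntegral.integral_comp_add_right]; push_cast; ring_nf
  simp only [hcell]
  simpa using intervalIntegral.sum_integral_adjacent_intervals
    (a := fun j : ℕ => x₀ + j * h) fun j hj => hψ.grid_cell hh hj

theorem exists_shift_sum_le_integral {Z : Set ℝ} (hh : 0 < h)
    (hψ : IntervalIntegrable ψ volume x₀ (x₀ + K * h)) (hZ : volume Z = 0) :
    ∃ s ∈ Ioo 0 h, (∀ j < K, x₀ + s + j * h ∉ Z) ∧
      h * ∑ j ∈ Finset.range K, ψ (x₀ + s + j * h) ≤ ∫ x in x₀..x₀ + K * h, ψ x := by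
  have hgrid (s : ℝ) (j : ℕ) : x₀ + s + j * h = s + (x₀ + j * h) := by ring
  simp only [hgrid]
  set G : ℝ → ℝ := fun s => ∑ j ∈ Finset.range K, ψ (s + (x₀ + j * h))
  have hGint : IntegrableOn G (Ioo 0 h) := by
    have := IntervalIntegrable.sum (μ := volume) (Finset.range K) fun j hj =>
      hψ.comp_add_grid_cell hh.le (Finset.mem_range.1 hj)
    refine (this.1.mono_set Ioo_subset_Ioc_self).congr_fun (fun s _ => ?_) measurableSet_Ioo
    simp [G, Finset.sum_apply]
  set N := ⋃ j ∈ Finset.range K, (fun s => s + (x₀ + j * h)) ⁻¹' Z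
  have hN : volume N = 0 := (measure_biUnion_null_iff (Finset.range K).countable_toSet).2
    fun j _ => by rw [measure_preimage_add_right, hZ]
  have hpos := measure_le_setAverage_pos (by simp [hh]) (by simp) hGint
  rw [← measure_sdiff_null hN] at hpos
  obtain ⟨s, ⟨hs, hsG⟩, hsN⟩ := nonempty_of_measure_ne_zero hpos.ne'
  refine ⟨s, hs, fun j hj hsZ => hsN (mem_biUnion (by simpa using hj) hsZ), ?_⟩
  rw [setAverage_eq, Real.volume_real_Ioo_of_le hh.le, sub_zero, smul_eq_mul,
    ← integral_Ioc_eq_integral_Ioo, ← intervalIntegral.integral_of_le hh.le,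
    integral_sum_comp_add_grid hψ hh.le] at hsG
  rwa [← le_inv_mul_iff₀ hh]

end ShiftedGridAverage

def shiftedGrid (a b s h : ℝ) : ℕ → ℝ
  | 0 => a
  | j + 1 => min b (a + s + j * h)

section ShiftedGrid

variable {a b s h : ℝ} {K : ℕ}

lemma grid_point_lt_of_lt (hs : s ∈ Ioo 0 h) (hK : a + K * h = b) {j : ℕ} (hj : j < K) :
    a + s + j * h < b := by
  have hjK : ((j : ℝ) + 1) * h ≤ K * h :=
    mul_le_mul_of_nonneg_right (by exact_mod_cast hj) (hs.1.trans hs.2).le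
  linarith [hs.2]

lemma shiftedGrid_succ_of_lt (hs : s ∈ Ioo 0 h) (hK : a + K * h = b) {j : ℕ} (hj : j < K) :
    shiftedGrid a b s h (j + 1) = a + s + j * h :=
  min_eq_right (grid_point_lt_of_lt hs hK hj).le

lemma shiftedGrid_last (hs : s ∈ Ioo 0 h) (hK : a + K * h = b) :
    shiftedGrid a b s h (K + 1) = b :=
  min_eq_left (by linarith [hs.1])

lemma shiftedGrid_succ_sub_mem_Ioc (hab : a < b) (hs : s ∈ Ioo 0 h) (hK : a + K * h = b)
    {i : ℕ} (hi : i ≤ K) :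
    shiftedGrid a b s h (i + 1) - shiftedGrid a b s h i ∈ Ioc 0 h := by
  rcases i with _ | j
  · simp only [shiftedGrid, CharP.cast_eq_zero, zero_mul, add_zero]
    exact ⟨sub_pos.2 (lt_min hab (by linarith [hs.1])),
      by linarith [min_le_right b (a + s), hs.2]⟩
  · have hj : j < K := by omega
    rw [shiftedGrid_succ_of_lt hs hK hj]
    simp only [shiftedGrid, Nat.cast_add, Nat.cast_one]
    exact ⟨sub_pos.2 (lt_min (grid_point_lt_of_lt hs hK hj) (by linarith [hs.1, hs.2])),
      by linarith [min_le_right b (a + s + (j + 1) * h)]⟩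

end ShiftedGrid

theorem exists_partition_mem_sum_le {a b h : ℝ} {K : ℕ} {S : Set ℝ} {ψ : ℝ → ℝ} (hab : a < b)
    (hh : 0 < h) (hK : a + K * h = b) (ha : a ∈ S) (hb : b ∈ S)
    (hnull : volume (Icc a b \ S) = 0) (hψ : IntervalIntegrable ψ volume a b) :
    ∃ t : ℕ → ℝ, t 0 = a ∧ t (K + 1) = b ∧ (∀ i ≤ K + 1, t i ∈ S) ∧
      StrictMonoOn t (Iic (K + 1)) ∧ (∀ i < K + 1, t (i + 1) - t i ≤ h) ∧
      h * ∑ i ∈ Finset.range (K + 1 + 1), ψ (t i) ≤ h * (ψ a + ψ b) + ∫ x in a..b, ψ x := by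
  obtain ⟨s, hs, hsS, hsum⟩ := exists_shift_sum_le_integral (x₀ := a) hh (hK ▸ hψ) hnull
  have hstep i (hi : i < K + 1) := shiftedGrid_succ_sub_mem_Ioc hab hs hK (Nat.lt_succ_iff.1 hi)
  refine ⟨shiftedGrid a b s h, rfl, shiftedGrid_last hs hK, fun i hi => ?_,
    strictMonoOn_Iic_of_lt_succ fun i hi => sub_pos.1 (hstep i hi).1,
    fun i hi => (hstep i hi).2, ?_⟩
  · rcases i with _ | j
    · exact ha
    rcases (Nat.lt_or_eq_of_le hi : j + 1 < K + 1 ∨ j + 1 = K + 1) with hj | hj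
    · rw [shiftedGrid_succ_of_lt hs hK (by omega)]
      by_contra hjS
      refine hsS j (by omega) ⟨⟨?_, (grid_point_lt_of_lt hs hK (by omega)).le⟩, hjS⟩
      nlinarith [hs.1]
    · rw [hj, shiftedGrid_last hs hK]
      exact hb
  · rw [Finset.sum_range_succ, Finset.sum_range_succ', shiftedGrid_last hs hK,
      Finset.sum_congr rfl fun j hj => by rw [shiftedGrid_succ_of_lt hs hK (Finset.mem_range.1 hj)]]
    rw [hK] at hsum
    simp only [shiftedGrid]
    linarith

lemma exists_nat_div_lt {L θ : ℝ} (hL : 0 < L) (hθ : 0 < θ) :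
    ∃ K : ℕ, (0 : ℝ) < K ∧ L / K < θ := by
  obtain ⟨K, hK⟩ := exists_nat_gt (L / θ)
  have hK0 : (0 : ℝ) < K := (div_pos hL hθ).trans hK
  exact ⟨K, hK0, (div_lt_iff₀ hK0).2 (by rwa [div_lt_iff₀ hθ, mul_comm] at hK)⟩

theorem exists_continuous_integral_abs_sub_le {g : ℝ → ℝ} {a b δ η : ℝ} (hab : a ≤ b)
    (hg : IntegrableOn g (Icc a b)) (hδ : 0 < δ) (hη : 0 < η) :
    ∃ φ : ℝ → ℝ, ∃ ρ > 0, Continuous φ ∧ ∫ x in a..b, |g x - φ x| ≤ δ ∧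
      ∀ x y, |x - y| < ρ → |φ x - φ y| ≤ η := by
  obtain ⟨φ, hφsupp, hφg, hφc, -⟩ := hg.exists_hasCompactSupport_integral_sub_le hδ
  obtain ⟨ρ, hρ, hφρ⟩ :=
    Metric.uniformContinuous_iff.1 (hφsupp.uniformContinuous_of_continuous hφc) η hη
  refine ⟨φ, ρ, hρ, hφc, ?_, fun x y hxy => (hφρ hxy).le⟩
  rwa [intervalIntegral.integral_of_le hab, ← integral_Icc_eq_integral_Ioc]

theorem stmt8_general (a b : ℝ) (hab : a < b) (S : Set ℝ)
    (ha : a ∈ S) (hb : b ∈ S) (hnull : volume (Set.Icc a b \ S) = 0)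
    (g : ℝ → ℝ)
    (hgi : IntegrableOn g (Set.Icc a b))
    (σ : ℕ) (hσ : σ = 0 ∨ σ = 1) (ε : ℝ) (hε : 0 < ε) :
    ∃ (n : ℕ) (t : ℕ → ℝ), 0 < n ∧ t 0 = a ∧ t n = b ∧
      (∀ i ≤ n, t i ∈ S) ∧
      (∀ i j, i < j → j ≤ n → t i < t j) ∧
      (∀ i < n, t (i + 1) - t i < ε) ∧
      |(∑ i ∈ Finset.range n, g (t (i + 1 - σ)) * (t (i + 1) - t i)) -
          ∫ s in Set.Icc a b, g s| < ε := by
  have hL : 0 < b - a := sub_pos.2 hab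
  have hg : IntervalIntegrable g volume a b := (uIcc_of_le hab.le ▸ hgi).intervalIntegrable
  obtain ⟨φ, ρ, hρ, hφc, hφg, hosc⟩ := exists_continuous_integral_abs_sub_le hab.le hgi
    (by positivity : 0 < ε / 4) (by positivity : 0 < ε / (4 * (b - a)))
  set C := |g a - φ a| + |g b - φ b|
  set θ := min ρ (min ε (ε / (4 * (C + 1))))
  have hθ : 0 < θ := lt_min hρ (lt_min hε (by positivity))
  obtain ⟨K, hK0, hhθ⟩ := exists_nat_div_lt hL hθ
  set h := (b - a) / K
  have hh : 0 < h := div_pos hL hK0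
  obtain ⟨hhρ, hhε, hhC⟩ := (lt_min_iff.1 hhθ).imp_right lt_min_iff.1
  obtain ⟨t, ht0, htn, htS, htmono, htmesh, htsum⟩ :=
    exists_partition_mem_sum_le (ψ := fun x => |g x - φ x|) hab hh
      (by rw [mul_div_cancel₀ _ hK0.ne']; ring) ha hb hnull
      (hg.sub (hφc.intervalIntegrable a b)).abs
  refine ⟨K + 1, t, K.succ_pos, ht0, htn, htS,
    fun i j hij hj => htmono (mem_Iic.2 (by omega)) hj hij,
    fun i hi => (htmesh i hi).trans_lt hhε, ?_⟩
  have key := abs_riemannSum_sub_integral_le hσ hh.le htmono.monotoneOn htmesh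
    (by rwa [ht0, htn]) hφc fun x y hxy => hosc x y (hxy.trans_lt hhρ)
  rw [ht0, htn] at key
  rw [integral_Icc_eq_integral_Ioc, ← intervalIntegral.integral_of_le hab.le]
  rw [lt_div_iff₀ (by positivity)] at hhC
  have hηL : ε / (4 * (b - a)) * (b - a) = ε / 4 := by field_simp
  linarith

/-- Riemann-sum approximation with partition points in a full-measure set:
for `a < b`, `S ⊆ [a,b]` of full measure with `a, b ∈ S`, `g ≥ 0` measurable and integrable
on `[a,b]`, `σ ∈ {0,1}` and `ε ∈ (0,1)`, there is a partition `a = t₀ < ⋯ < tₙ = b` with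
all `tᵢ ∈ S`, mesh `< ε`, whose (left/right, according to `σ`) Riemann sum is `ε`-close to
`∫_a^b g`. -/
theorem stmt8 (a b : ℝ) (hab : a < b) (S : Set ℝ) (hS : S ⊆ Set.Icc a b)
    (ha : a ∈ S) (hb : b ∈ S) (hnull : volume (Set.Icc a b \ S) = 0)
    (g : ℝ → ℝ) (hgm : Measurable g) (hg0 : ∀ t, 0 ≤ g t)
    (hgi : IntegrableOn g (Set.Icc a b))
    (σ : ℕ) (hσ : σ = 0 ∨ σ = 1) (ε : ℝ) (hε : 0 < ε) (hε1 : ε < 1) :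
    ∃ (n : ℕ) (t : ℕ → ℝ), 0 < n ∧ t 0 = a ∧ t n = b ∧
      (∀ i ≤ n, t i ∈ S) ∧
      (∀ i j, i < j → j ≤ n → t i < t j) ∧
      (∀ i < n, t (i + 1) - t i < ε) ∧
      |(∑ i ∈ Finset.range n, g (t (i + 1 - σ)) * (t (i + 1) - t i)) -
          ∫ s in Set.Icc a b, g s| < ε :=
  stmt8_general a b hab S ha hb hnull g hgi σ hσ ε hε
end

section
/- Γ-limsup (recovery sequence): In the setting of the penalised energies E_ε above, for every (u, z) with u ∈ H¹(Ω) of mean m and z = K(u), the sequence (u, K_ε(u)) satisfies (u, K_ε(u)) → (u, K(u)) in (H¹_av(Ω))* × L²(Ω) and E_ε(u, K_ε(u)) = ∫_Ω (½|∇u|² + F(u)) dx for all ε, hence limsup_ε E_ε(u, K_ε(u)) ≤ E_0(u, z). -/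
/-! The recovery sequence is `u` itself paired with `z_ε = K_ε(u)`, for which the penalisation
vanishes identically. Convergence `K_ε(u) → K(u)` in `L²` comes from the pointwise bound
`|K_ε(s) - K(s)| ≤ ‖A_ε - A‖_∞ |s|` on primitives, which reduces it to `u ∈ L²`. -/

open MeasureTheory Filter
open scoped ENNReal Classical

/-- Membership in `H¹(Ω)` with prescribed mean `m` (smooth representative encoding):
differentiable with `u, ∇u ∈ L²(Ω)` and `⨍_Ω u = m`. -/
def inH1m (d : ℕ) (Ω : Set (EuclideanSpace ℝ (Fin d))) (m : ℝ)
    (u : EuclideanSpace ℝ (Fin d) → ℝ) : Prop :=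
  Differentiable ℝ u ∧ MemLp u 2 (volume.restrict Ω) ∧
    MemLp (fun x => ‖fderiv ℝ u x‖) 2 (volume.restrict Ω) ∧
    (⨍ x in Ω, u x ∂volume) = m

/-- The Ginzburg–Landau (Cahn–Hilliard) energy `∫_Ω (½|∇u|² + F(u))`. -/
noncomputable def CHen (d : ℕ) (Ω : Set (EuclideanSpace ℝ (Fin d))) (F : ℝ → ℝ)
    (u : EuclideanSpace ℝ (Fin d) → ℝ) : ℝ :=
  ∫ x in Ω, ((1 / 2) * ‖fderiv ℝ u x‖ ^ 2 + F (u x))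

/-- The penalised energy `E_ε(u,z) = ∫_Ω(½|∇u|² + F(u)) + (1/2ε²)∫_Ω (z - K_ε(u))²`,
`+∞` away from `(H¹ mean-m) × L²`. -/
noncomputable def Eeps (d : ℕ) (Ω : Set (EuclideanSpace ℝ (Fin d))) (m : ℝ) (F : ℝ → ℝ)
    (ε : ℝ) (Kε : ℝ → ℝ) (u z : EuclideanSpace ℝ (Fin d) → ℝ) : ℝ≥0∞ :=
  if inH1m d Ω m u ∧ MemLp z 2 (volume.restrict Ω) then
    ENNReal.ofReal (CHen d Ω F u +
      (1 / (2 * ε ^ 2)) * ∫ x in Ω, (z x - Kε (u x)) ^ 2)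
  else ⊤

/-- The limit energy: `E₀(u,z) = ∫_Ω(½|∇u|² + F(u))` if `z = K(u)` (a.e.) and `u ∈ H¹`
with mean `m`, `+∞` otherwise. -/
noncomputable def Ezero (d : ℕ) (Ω : Set (EuclideanSpace ℝ (Fin d))) (m : ℝ) (F : ℝ → ℝ)
    (K : ℝ → ℝ) (u z : EuclideanSpace ℝ (Fin d) → ℝ) : ℝ≥0∞ :=
  if inH1m d Ω m u ∧ (∀ᵐ x ∂(volume.restrict Ω), z x = K (u x)) then
    ENNReal.ofReal (CHen d Ω F u)
  else ⊤

/-- The `(H¹_av(Ω))*` norm of `w`, realised as the supremum of `∫_Ω w φ` over mean-zero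
`C¹` test functions with Dirichlet norm at most one. -/
noncomputable def dualNormAv (d : ℕ) (Ω : Set (EuclideanSpace ℝ (Fin d)))
    (w : EuclideanSpace ℝ (Fin d) → ℝ) : ℝ :=
  ⨆ φ : {φ : EuclideanSpace ℝ (Fin d) → ℝ //
      ContDiff ℝ 1 φ ∧ (∫ x in Ω, φ x) = 0 ∧ (∫ x in Ω, ‖fderiv ℝ φ x‖ ^ 2) ≤ 1},
    ∫ x in Ω, w x * φ.1 x

open scoped NNReal Topology

section Primitive

variable {α : Type*} [MeasurableSpace α] {μ : Measure α} {p : ℝ≥0∞}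

theorem norm_primitive_le_mul_norm {f : ℝ → ℝ} {M : ℝ} (hf : ∀ t, ‖f t‖ ≤ M) (s : ℝ) :
    ‖∫ t in (0:ℝ)..s, f t‖ ≤ M * ‖s‖ := by
  simpa [Real.norm_eq_abs] using
    intervalIntegral.norm_integral_le_of_norm_le_const (a := 0) (b := s) fun t _ => hf t

theorem MeasureTheory.MemLp.primitive_comp {f : ℝ → ℝ} (hf : Continuous f) {M : ℝ}
    (hM : ∀ t, ‖f t‖ ≤ M) {u : α → ℝ} (hu : MemLp u p μ) :
    MemLp (fun x => ∫ t in (0:ℝ)..u x, f t) p μ :=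
  hu.of_le_mul
    ((intervalIntegral.continuous_primitive (fun a b => hf.intervalIntegrable a b)
      0).comp_aestronglyMeasurable hu.1)
    (ae_of_all _ fun x => norm_primitive_le_mul_norm hM (u x))

theorem tendsto_eLpNorm_primitive_comp_sub {ι : Type*} {l : Filter ι} {A : ι → ℝ → ℝ}
    {B : ℝ → ℝ} (hA : ∀ k, Continuous (A k)) (hB : Continuous B)
    (hAB : TendstoUniformly A B l) {u : α → ℝ} (hu : MemLp u p μ) :
    Tendsto (fun k =>
      eLpNorm (fun x => (∫ t in (0:ℝ)..u x, A k t) - ∫ t in (0:ℝ)..u x, B t) p μ) l (𝓝 0) := by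
  refine ENNReal.tendsto_nhds_zero.2 fun δ hδ => ?_
  obtain ⟨η, hη, hηδ⟩ := ENNReal.exists_nnreal_pos_mul_lt hu.eLpNorm_ne_top hδ.ne'
  filter_upwards [Metric.tendstoUniformly_iff.1 hAB η hη] with k hk
  have hpointwise : ∀ x,
      ‖(∫ t in (0:ℝ)..u x, A k t) - ∫ t in (0:ℝ)..u x, B t‖ ≤ η * ‖u x‖ := by
    intro x
    rw [← intervalIntegral.integral_sub ((hA k).intervalIntegrable _ _)
      (hB.intervalIntegrable _ _)]
    exact norm_primitive_le_mul_norm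
      (fun t => by rw [← dist_eq_norm, dist_comm]; exact (hk t).le) (u x)
  calc _ ≤ ENNReal.ofReal η * eLpNorm u p μ :=
        eLpNorm_le_mul_eLpNorm_of_ae_le_mul (ae_of_all _ hpointwise) p
    _ ≤ δ := by rw [ENNReal.ofReal_coe_nnreal]; exact hηδ.le

end Primitive

section Energies

variable {d : ℕ} {Ω : Set (EuclideanSpace ℝ (Fin d))} {m : ℝ} {F : ℝ → ℝ}
  {K : ℝ → ℝ} {u : EuclideanSpace ℝ (Fin d) → ℝ}

theorem Eeps_comp_eq_CHen {ε : ℝ} (hu : inH1m d Ω m u)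
    (hKu : MemLp (fun x => K (u x)) 2 (volume.restrict Ω)) :
    Eeps d Ω m F ε K u (fun x => K (u x)) = ENNReal.ofReal (CHen d Ω F u) := by
  simp [Eeps, hu, hKu]

theorem Ezero_comp_eq_CHen (hu : inH1m d Ω m u) :
    Ezero d Ω m F K u (fun x => K (u x)) = ENNReal.ofReal (CHen d Ω F u) := by
  simp [Ezero, hu]

end Energies

theorem stmt15_general (d : ℕ)
    (Ω : Set (EuclideanSpace ℝ (Fin d)))
    (m : ℝ) (F : ℝ → ℝ)
    (Astar Atop : ℝ)
    (A : ℕ → ℝ → ℝ) (Al : ℝ → ℝ) (hAc : ∀ k, Continuous (A k)) (hAlc : Continuous Al)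
    (hAb : ∀ k s, Astar ≤ A k s ∧ A k s ≤ Atop)
    (hAconv : TendstoUniformly A Al atTop)
    (ε : ℕ → ℝ)
    (u : EuclideanSpace ℝ (Fin d) → ℝ) (hu : inH1m d Ω m u) :
    Tendsto (fun k =>
        eLpNorm (fun x => (∫ t in (0:ℝ)..(u x), A k t) - ∫ t in (0:ℝ)..(u x), Al t) 2
          (volume.restrict Ω)) atTop (nhds 0) ∧
    (∀ k, Eeps d Ω m F (ε k) (fun s => ∫ t in (0:ℝ)..s, A k t) u
        (fun x => ∫ t in (0:ℝ)..(u x), A k t) = ENNReal.ofReal (CHen d Ω F u)) ∧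
    limsup (fun k =>
        Eeps d Ω m F (ε k) (fun s => ∫ t in (0:ℝ)..s, A k t) u
          (fun x => ∫ t in (0:ℝ)..(u x), A k t)) atTop ≤
      Ezero d Ω m F (fun s => ∫ t in (0:ℝ)..s, Al t) u
        (fun x => ∫ t in (0:ℝ)..(u x), Al t) := by
  have hKu : ∀ k, MemLp (fun x => ∫ t in (0:ℝ)..(u x), A k t) 2 (volume.restrict Ω) :=
    fun k => hu.2.1.primitive_comp (hAc k)
      fun t => abs_le_max_abs_abs (hAb k t).1 (hAb k t).2
  have henergy : ∀ k, Eeps d Ω m F (ε k) (fun s => ∫ t in (0:ℝ)..s, A k t) u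
      (fun x => ∫ t in (0:ℝ)..(u x), A k t) = ENNReal.ofReal (CHen d Ω F u) :=
    fun k => Eeps_comp_eq_CHen hu (hKu k)
  refine ⟨tendsto_eLpNorm_primitive_comp_sub hAc hAlc hAconv hu.2.1, henergy, ?_⟩
  simp only [henergy, limsup_const, Ezero_comp_eq_CHen hu, le_refl]

/-- Γ-limsup / recovery sequence: for `u ∈ H¹(Ω)` of mean `m` and
`z = K(u)`, the recovery pairs `(u, K_ε(u))` converge to `(u, K(u))` in
`(H¹_av(Ω))* × L²(Ω)`, have `E_ε(u, K_ε(u)) = ∫_Ω(½|∇u|² + F(u))`, and hence the limsup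
of their energies is at most `E₀(u, z)`. -/
theorem stmt15 (d : ℕ) (hd : 1 ≤ d) (hd3 : d ≤ 3)
    (Ω : Set (EuclideanSpace ℝ (Fin d))) (hΩo : IsOpen Ω) (hΩne : Ω.Nonempty)
    (hΩb : Bornology.IsBounded Ω) (hΩc : Convex ℝ Ω)
    (m : ℝ) (F : ℝ → ℝ) (hF : ContDiff ℝ 2 F) (hF0 : ∀ s, 0 ≤ F s)
    (c p : ℝ) (hc : 0 < c) (hp : 1 ≤ p) (hp3 : d = 3 → p ≤ 5)
    (hFgrowth : ∀ s, |F s| ≤ c * (|s| ^ (p + 1) + 1))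
    (Astar Atop : ℝ) (hAs : 0 < Astar) (hAt : Astar ≤ Atop)
    (A : ℕ → ℝ → ℝ) (Al : ℝ → ℝ) (hAc : ∀ k, Continuous (A k)) (hAlc : Continuous Al)
    (hAb : ∀ k s, Astar ≤ A k s ∧ A k s ≤ Atop)
    (hAconv : TendstoUniformly A Al atTop)
    (ε : ℕ → ℝ) (hε : ∀ k, 0 < ε k ∧ ε k < 1) (hε0 : Tendsto ε atTop (nhds 0))
    (u : EuclideanSpace ℝ (Fin d) → ℝ) (hu : inH1m d Ω m u) :
    Tendsto (fun k =>
        eLpNorm (fun x => (∫ t in (0:ℝ)..(u x), A k t) - ∫ t in (0:ℝ)..(u x), Al t) 2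
          (volume.restrict Ω)) atTop (nhds 0) ∧
    (∀ k, Eeps d Ω m F (ε k) (fun s => ∫ t in (0:ℝ)..s, A k t) u
        (fun x => ∫ t in (0:ℝ)..(u x), A k t) = ENNReal.ofReal (CHen d Ω F u)) ∧
    limsup (fun k =>
        Eeps d Ω m F (ε k) (fun s => ∫ t in (0:ℝ)..s, A k t) u
          (fun x => ∫ t in (0:ℝ)..(u x), A k t)) atTop ≤
      Ezero d Ω m F (fun s => ∫ t in (0:ℝ)..s, Al t) u
        (fun x => ∫ t in (0:ℝ)..(u x), Al t) :=
  stmt15_general d Ω m F Astar Atop A Al hAc hAlc hAb hAconv ε u hu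
end

section
/- Let H be a real separable Hilbert space and S_n : H → P(H*) set-valued maps for n ∈ ℕ ∪ {∞} such that S_∞(x) is closed and convex for every x, and such that for every subsequence: x_{n_k} → x strongly, y_{n_k} ∈ S_{n_k}(x_{n_k}), y_{n_k} ⇀ y weakly implies y ∈ S_∞(x). Then the evolutionary closedness holds: if x_n → x_∞ in L²(0,T;H), y_n ⇀ y_∞ in L²(0,T;H*), and y_n(t) ∈ S_n(x_n(t)) for a.e. t and all n, then y_∞(t) ∈ S_∞(x_∞(t)) for a.e. t ∈ (0,T). -/
/-!
Pass to a subsequence along which `x_n(t) → x_∞(t)` for a.e. `t`. By Mazur's lemma, convex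
combinations `v_i` of tails of `(y_n)` converge to `y_∞` in `L²`, hence a.e. along a further
subsequence, and by Fatou the same combinations of `‖y_n(t)‖²` stay bounded for infinitely many `i`.
Fix such a `t` and suppose `y_∞(t) ∉ S_∞(x_∞(t))`; separate them by a functional `f` and a level
`u`. Every weak sequential cluster point of `(y_n(t))` lies in `S_∞(x_∞(t))`, and bounded
subsequences have such cluster points, so for every `ε > 0` eventually
`u ≤ f(y_n(t)) + ε ‖y_n(t)‖²`. Averaging along `v_i` gives `u - ε Q ≤ f(y_∞(t))`, and `ε → 0`
contradicts the separation. The quadratic penalty plays the role of the Young measure: it stops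
mass escaping to infinity from moving the barycentre.
-/

open MeasureTheory Filter
open scoped RealInnerProductSpace Topology ENNReal

section WeakConvergence

variable {E : Type*} [NormedAddCommGroup E] [InnerProductSpace ℝ E]

def WeakTendsto (u : ℕ → E) (a : E) : Prop :=
  ∀ w : E, Tendsto (fun n => ⟪u n, w⟫) atTop (𝓝 ⟪a, w⟫)

lemma WeakTendsto.comp_strictMono {u : ℕ → E} {a : E} (h : WeakTendsto u a) {ψ : ℕ → ℕ}
    (hψ : StrictMono ψ) : WeakTendsto (u ∘ ψ) a :=
  fun w => (h w).comp hψ.tendsto_atTop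

variable [CompleteSpace E]

lemma WeakTendsto.tendsto_apply {u : ℕ → E} {a : E} (h : WeakTendsto u a)
    (f : StrongDual ℝ E) : Tendsto (fun n => f (u n)) atTop (𝓝 (f a)) := by
  have hf : ∀ v, f v = ⟪v, (InnerProductSpace.toDual ℝ E).symm f⟫ := fun v => by
    rw [real_inner_comm, InnerProductSpace.toDual_symm_apply]
  simpa only [hf] using h _

lemma WeakTendsto.exists_norm_le {u : ℕ → E} {a : E} (h : WeakTendsto u a) :
    ∃ C, ∀ n, ‖u n‖ ≤ C := by
  obtain ⟨C, hC⟩ := banach_steinhaus (g := fun n => innerSL ℝ (u n)) fun w => by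
    obtain ⟨C, hC⟩ := (h w).norm.bddAbove_range
    exact ⟨C, fun n => hC ⟨n, rfl⟩⟩
  exact ⟨C, fun n => innerSL_apply_norm ℝ (u n) ▸ hC n⟩

variable [TopologicalSpace.SeparableSpace E]

lemma exists_strictMono_weakTendsto_of_norm_le {u : ℕ → E} {B : ℝ} (hu : ∀ n, ‖u n‖ ≤ B) :
    ∃ ψ : ℕ → ℕ, StrictMono ψ ∧ ∃ a, WeakTendsto (u ∘ ψ) a := by
  let v : ℕ → WeakDual ℝ E := fun n => StrongDual.toWeakDual (InnerProductSpace.toDual ℝ E (u n))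
  obtain ⟨ℓ, -, ψ, hψ, hlim⟩ := WeakDual.isSeqCompact_closedBall ℝ E (0 : StrongDual ℝ E) B
    (x := v) fun n => by simpa [v] using hu n
  refine ⟨ψ, hψ, (InnerProductSpace.toDual ℝ E).symm (WeakDual.toStrongDual ℓ), fun w => ?_⟩
  rw [InnerProductSpace.toDual_symm_apply]
  exact ((WeakDual.eval_continuous w).tendsto ℓ).comp hlim

lemma eventually_le_apply_add_mul_norm_sq {y : ℕ → E} (f : StrongDual ℝ E) {u : ℝ}
    (hclu : ∀ ψ : ℕ → ℕ, StrictMono ψ → ∀ a, WeakTendsto (y ∘ ψ) a → u < f a)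
    {ε : ℝ} (hε : 0 < ε) : ∀ᶠ k in atTop, u ≤ f (y k) + ε * ‖y k‖ ^ 2 := by
  by_contra hcon
  obtain ⟨φ, hφ, hlt⟩ := extraction_of_frequently_atTop
    ((not_eventually.1 hcon).mono fun _ hk => not_le.1 hk)
  -- `ε ‖y‖² < u - f y ≤ |u| + ‖f‖ ‖y‖` along `φ`, so the quadratic term bounds `‖y‖`.
  have hbdd : ∀ n, ‖y (φ n)‖ ≤ 1 + (|u| + ‖f‖) / ε := fun n => by
    have hf : |f (y (φ n))| ≤ ‖f‖ * ‖y (φ n)‖ := f.le_opNorm _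
    rw [← sub_le_iff_le_add', le_div_iff₀ hε]
    by_contra! hr
    have hr1 : 1 < ‖y (φ n)‖ := by nlinarith [abs_nonneg u, norm_nonneg f]
    nlinarith [abs_le.1 hf, hlt n, le_abs_self u, mul_pos (sub_pos.2 hr) (one_pos.trans hr1),
      mul_nonneg (abs_nonneg u) (sub_pos.2 hr1).le]
  obtain ⟨ψ, hψ, a, ha⟩ := exists_strictMono_weakTendsto_of_norm_le fun n => hbdd n
  have hfa : f a ≤ u := le_of_tendsto' (ha.tendsto_apply f) fun n =>
    (lt_of_le_of_lt (le_add_of_nonneg_right (by positivity)) (hlt (ψ n))).le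
  exact (hclu (φ ∘ ψ) (hφ.comp hψ) a ha).not_ge hfa

theorem mem_of_tendsto_convexCombination {K : Set E} (hKc : Convex ℝ K) (hK : IsClosed K)
    {y : ℕ → E} (hclu : ∀ ψ : ℕ → ℕ, StrictMono ψ → ∀ a, WeakTendsto (y ∘ ψ) a → a ∈ K)
    {s : ℕ → Finset ℕ} {c : ℕ → ℕ → ℝ} {κ : ℕ → ℕ → ℕ} (hκ : ∀ i, ∀ j ∈ s i, i ≤ κ i j)
    (hc0 : ∀ i, ∀ j ∈ s i, 0 ≤ c i j) (hc1 : ∀ i, ∑ j ∈ s i, c i j = 1) {a : E}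
    (ha : Tendsto (fun i => ∑ j ∈ s i, c i j • y (κ i j)) atTop (𝓝 a)) {Q : ℝ}
    (hQ : ∃ᶠ i in atTop, ∑ j ∈ s i, c i j * ‖y (κ i j)‖ ^ 2 ≤ Q) : a ∈ K := by
  by_contra haK
  obtain ⟨f, u, hfa, hfK⟩ := geometric_hahn_banach_point_closed hKc hK haK
  suffices key : ∀ ε > 0, u - ε * Q ≤ f a by
    have hlim : Tendsto (fun ε : ℝ => u - ε * Q) (𝓝[>] 0) (𝓝 u) :=
      ((continuous_const.sub (continuous_id.mul continuous_const)).tendsto' 0 u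
        (by simp)).mono_left nhdsWithin_le_nhds
    exact (le_of_tendsto hlim (eventually_nhdsWithin_of_forall fun ε hε => key ε hε)).not_gt hfa
  intro ε hε
  obtain ⟨N, hN⟩ := eventually_atTop.1 <|
    eventually_le_apply_add_mul_norm_sq f (fun ψ hψ b hb => hfK b (hclu ψ hψ b hb)) hε
  have hcomb : ∀ i ≥ N, u - ε * ∑ j ∈ s i, c i j * ‖y (κ i j)‖ ^ 2 ≤
      f (∑ j ∈ s i, c i j • y (κ i j)) := fun i hi =>
    calc u - ε * ∑ j ∈ s i, c i j * ‖y (κ i j)‖ ^ 2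
        = ∑ j ∈ s i, c i j * (u - ε * ‖y (κ i j)‖ ^ 2) := by
          simp only [mul_sub, Finset.sum_sub_distrib, ← Finset.sum_mul, hc1, Finset.mul_sum]
          ring_nf
      _ ≤ ∑ j ∈ s i, c i j * f (y (κ i j)) := Finset.sum_le_sum fun j hj =>
          mul_le_mul_of_nonneg_left (by linarith [hN _ (hi.trans (hκ i j hj))]) (hc0 i j hj)
      _ = f (∑ j ∈ s i, c i j • y (κ i j)) := by simp only [map_sum, map_smul, smul_eq_mul]
  refine ge_of_tendsto_of_frequently ((f.continuous.tendsto a).comp ha) ?_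
  refine (hQ.and_eventually (eventually_ge_atTop N)).mono fun i ⟨hiQ, hiN⟩ => ?_
  show u - ε * Q ≤ f (∑ j ∈ s i, c i j • y (κ i j))
  linarith [hcomb i hiN, mul_le_mul_of_nonneg_left hiQ hε.le]

end WeakConvergence

lemma mem_closure_convexHull_range_of_tendsto_apply {E : Type*} [AddCommGroup E] [Module ℝ E]
    [TopologicalSpace E] [IsTopologicalAddGroup E] [ContinuousSMul ℝ E] [LocallyConvexSpace ℝ E]
    {u : ℕ → E} {a : E}
    (h : ∀ f : StrongDual ℝ E, Tendsto (fun n => f (u n)) atTop (𝓝 (f a))) :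
    a ∈ closure (convexHull ℝ (Set.range u)) := by
  by_contra ha
  obtain ⟨f, r, hfa, hf⟩ :=
    geometric_hahn_banach_point_closed (convex_convexHull ℝ _).closure isClosed_closure ha
  exact hfa.not_ge <| ge_of_tendsto' (h f) fun n =>
    (hf _ (subset_closure (subset_convexHull ℝ _ ⟨n, rfl⟩))).le

lemma exists_convexCombination_norm_sub_lt {E : Type*} [NormedAddCommGroup E] [NormedSpace ℝ E]
    {u : ℕ → E} {a : E}
    (h : ∀ f : StrongDual ℝ E, Tendsto (fun n => f (u n)) atTop (𝓝 (f a))) (m : ℕ) {ε : ℝ}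
    (hε : 0 < ε) : ∃ (s : Finset ℕ) (c : ℕ → ℝ), (∀ j ∈ s, 0 ≤ c j) ∧ ∑ j ∈ s, c j = 1 ∧
      ‖∑ j ∈ s, c j • u (j + m) - a‖ < ε := by
  have ha := mem_closure_convexHull_range_of_tendsto_apply (u := fun j => u (j + m))
    fun f => (tendsto_add_atTop_iff_nat m).2 (h f)
  obtain ⟨v, hv, hva⟩ := Metric.mem_closure_iff.1 ha ε hε
  rw [convexHull_range_eq_exists_affineCombination] at hv
  obtain ⟨s, c, hc0, hc1, rfl⟩ := hv
  refine ⟨s, c, hc0, hc1, ?_⟩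
  rwa [← dist_eq_norm, dist_comm, ← s.affineCombination_eq_linear_combination _ _ hc1]

namespace MeasureTheory

variable {α : Type*} [MeasurableSpace α] {μ : Measure α}
  {H : Type*} [NormedAddCommGroup H] [InnerProductSpace ℝ H]

lemma L2.norm_sq_eq_integral_norm_sq (F : Lp H 2 μ) : ‖F‖ ^ 2 = ∫ t, ‖F t‖ ^ 2 ∂μ := by
  simp only [← real_inner_self_eq_norm_sq, L2.inner_def]

lemma MemLp.norm_toLp_eq_sqrt_integral {f : α → H} (hf : MemLp f 2 μ) :
    ‖hf.toLp f‖ = √(∫ t, ‖f t‖ ^ 2 ∂μ) := by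
  rw [← Real.sqrt_sq (norm_nonneg _), L2.norm_sq_eq_integral_norm_sq]
  congr 1
  exact integral_congr_ae (hf.coeFn_toLp.mono fun t ht => by simp only [ht])

lemma MemLp.inner_toLp_eq_integral {f : α → H} (hf : MemLp f 2 μ) (W : Lp H 2 μ) :
    ⟪hf.toLp f, W⟫ = ∫ t, ⟪f t, W t⟫ ∂μ := by
  rw [L2.inner_def]
  exact integral_congr_ae (hf.coeFn_toLp.mono fun t ht => by simp only [ht])

lemma ae_exists_frequently_le_of_integral_le {f : ℕ → α → ℝ} (hf0 : ∀ i t, 0 ≤ f i t)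
    (hfi : ∀ i, Integrable (f i) μ) {C : ℝ} (hC : ∀ i, ∫ t, f i t ∂μ ≤ C) :
    ∀ᵐ t ∂μ, ∃ Q, ∃ᶠ i in atTop, f i t ≤ Q := by
  set g : ℕ → α → ℝ≥0∞ := fun i t => ENNReal.ofReal (f i t)
  have hg : ∀ i, AEMeasurable (g i) μ := fun i => (hfi i).aemeasurable.ennreal_ofReal
  have hmeas : AEMeasurable (fun t => liminf (fun i => g i t) atTop) μ := by
    simp_rw [liminf_eq_iSup_iInf_of_nat]
    exact AEMeasurable.iSup fun n => AEMeasurable.biInf _ (Set.to_countable _) fun i _ => hg i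
  have hfatou : ∫⁻ t, liminf (fun i => g i t) atTop ∂μ ≤ ENNReal.ofReal C := by
    refine (lintegral_liminf_le' hg).trans (liminf_le_of_frequently_le
      (Frequently.of_forall fun i => ?_))
    rw [← ofReal_integral_eq_lintegral_ofReal (hfi i) (Eventually.of_forall (hf0 i))]
    exact ENNReal.ofReal_le_ofReal (hC i)
  filter_upwards [ae_lt_top' hmeas (hfatou.trans_lt ENNReal.ofReal_lt_top).ne] with t ht
  refine ⟨(liminf (fun i => g i t) atTop + 1).toReal, (frequently_lt_of_liminf_lt
    (by isBoundedDefault) (ENNReal.lt_add_right ht.ne one_ne_zero)).mono fun i hi => ?_⟩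
  exact (ENNReal.ofReal_le_iff_le_toReal (ENNReal.add_lt_top.2 ⟨ht, ENNReal.one_lt_top⟩).ne).1
    hi.le

lemma exists_convexCombination_ae_tendsto [CompleteSpace H] {Y : ℕ → Lp H 2 μ} {Z : Lp H 2 μ}
    (hY : WeakTendsto Y Z) :
    ∃ (s : ℕ → Finset ℕ) (c : ℕ → ℕ → ℝ) (κ : ℕ → ℕ → ℕ), (∀ i, ∀ j ∈ s i, i ≤ κ i j) ∧
      (∀ i, ∀ j ∈ s i, 0 ≤ c i j) ∧ (∀ i, ∑ j ∈ s i, c i j = 1) ∧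
      ∀ᵐ t ∂μ, Tendsto (fun i => ∑ j ∈ s i, c i j • Y (κ i j) t) atTop (𝓝 (Z t)) := by
  choose s c hc0 hc1 hsZ using fun i : ℕ =>
    exists_convexCombination_norm_sub_lt hY.tendsto_apply i (Nat.one_div_pos_of_nat (n := i))
  set V : ℕ → Lp H 2 μ := fun i => ∑ j ∈ s i, c i j • Y (j + i)
  have hV : Tendsto V atTop (𝓝 Z) := tendsto_iff_norm_sub_tendsto_zero.2 <|
    squeeze_zero (fun _ => norm_nonneg _) (fun i => (hsZ i).le)
      tendsto_one_div_add_atTop_nhds_zero_nat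
  obtain ⟨ψ, hψ, hVZ⟩ := (tendstoInMeasure_of_tendsto_Lp hV).exists_seq_tendsto_ae
  have hVcoe : ∀ᵐ t ∂μ, ∀ i, V i t = ∑ j ∈ s i, c i j • Y (j + i) t := by
    rw [ae_all_iff]
    intro i
    filter_upwards [Lp.coeFn_finsetSum (s i) (fun j => c i j • Y (j + i)),
      ae_all_iff.2 fun j => Lp.coeFn_smul (c i j) (Y (j + i))] with t hsum hsmul
    rw [hsum, Finset.sum_apply]
    exact Finset.sum_congr rfl fun j _ => hsmul j
  refine ⟨fun i => s (ψ i), fun i => c (ψ i), fun i j => j + ψ i,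
    fun i j _ => (hψ.id_le i).trans le_add_self, fun i => hc0 (ψ i), fun i => hc1 (ψ i), ?_⟩
  filter_upwards [hVZ, hVcoe] with t hVt hcoe
  simpa only [hcoe] using hVt

lemma ae_exists_frequently_convexCombination_norm_sq_le {Y : ℕ → Lp H 2 μ} {C : ℝ}
    (hC : ∀ n, ‖Y n‖ ≤ C) {s : ℕ → Finset ℕ} {c : ℕ → ℕ → ℝ} {κ : ℕ → ℕ → ℕ}
    (hc0 : ∀ i, ∀ j ∈ s i, 0 ≤ c i j) (hc1 : ∀ i, ∑ j ∈ s i, c i j = 1) :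
    ∀ᵐ t ∂μ, ∃ Q, ∃ᶠ i in atTop, ∑ j ∈ s i, c i j * ‖Y (κ i j) t‖ ^ 2 ≤ Q := by
  have hint : ∀ n, Integrable (fun t => ‖Y n t‖ ^ 2) μ := fun n =>
    (memLp_two_iff_integrable_sq_norm (Lp.aestronglyMeasurable _)).1 (Lp.memLp _)
  refine ae_exists_frequently_le_of_integral_le
    (fun i t => Finset.sum_nonneg fun j hj => mul_nonneg (hc0 i j hj) (by positivity))
    (fun i => integrable_finsetSum _ fun j _ => (hint _).const_mul _) (C := C ^ 2) fun i => ?_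
  rw [integral_finsetSum _ fun j _ => (hint _).const_mul _]
  calc ∑ j ∈ s i, ∫ t, c i j * ‖Y (κ i j) t‖ ^ 2 ∂μ
      = ∑ j ∈ s i, c i j * ‖Y (κ i j)‖ ^ 2 := by
        simp only [integral_const_mul, L2.norm_sq_eq_integral_norm_sq]
    _ ≤ ∑ j ∈ s i, c i j * C ^ 2 := Finset.sum_le_sum fun j hj =>
        mul_le_mul_of_nonneg_left (pow_le_pow_left₀ (norm_nonneg _) (hC _) 2) (hc0 i j hj)
    _ = C ^ 2 := by rw [← Finset.sum_mul, hc1, one_mul]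

theorem ae_mem_of_tendsto_of_weakTendsto [CompleteSpace H] [TopologicalSpace.SeparableSpace H]
    {S : ℕ → H → Set H} {K : H → Set H} (hKc : ∀ x, Convex ℝ (K x)) (hK : ∀ x, IsClosed (K x))
    (hstatic : ∀ φ : ℕ → ℕ, StrictMono φ → ∀ (x y : ℕ → H) (xl yl : H),
      (∀ k, y k ∈ S (φ k) (x k)) → Tendsto x atTop (𝓝 xl) → WeakTendsto y yl → yl ∈ K xl)
    {X Y : ℕ → Lp H 2 μ} {Xl Yl : Lp H 2 μ} (hX : Tendsto X atTop (𝓝 Xl))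
    (hY : WeakTendsto Y Yl) (hincl : ∀ n, ∀ᵐ t ∂μ, Y n t ∈ S n (X n t)) :
    ∀ᵐ t ∂μ, Yl t ∈ K (Xl t) := by
  obtain ⟨φ, hφ, hXφ⟩ := (tendstoInMeasure_of_tendsto_Lp hX).exists_seq_tendsto_ae
  obtain ⟨s, c, κ, hκ, hc0, hc1, hYφ⟩ :=
    exists_convexCombination_ae_tendsto (μ := μ) (hY.comp_strictMono hφ)
  obtain ⟨C, hC⟩ := hY.exists_norm_le
  filter_upwards [hXφ, hYφ, ae_exists_frequently_convexCombination_norm_sq_le (κ := κ)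
    (fun n => hC (φ n)) hc0 hc1, ae_all_iff.2 hincl] with t hXt hYt ⟨Q, hQ⟩ hinclt
  refine mem_of_tendsto_convexCombination (y := fun k => Y (φ k) t) (hKc _) (hK _)
    (fun ψ hψ a ha => ?_) hκ hc0 hc1 hYt hQ
  exact hstatic (φ ∘ ψ) (hφ.comp hψ) _ _ _ a (fun k => hinclt _) (hXt.comp hψ.tendsto_atTop) ha

end MeasureTheory

theorem stmt17_general {H : Type*} [NormedAddCommGroup H] [InnerProductSpace ℝ H]
    [CompleteSpace H] [SecondCountableTopology H]
    (T : ℝ)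
    (S : ℕ → H → Set H) (Sinf : H → Set H)
    (hclosed : ∀ x, IsClosed (Sinf x)) (hconv : ∀ x, Convex ℝ (Sinf x))
    (hstatic : ∀ φ : ℕ → ℕ, StrictMono φ →
      ∀ (x y : ℕ → H) (xl yl : H),
        (∀ k, y k ∈ S (φ k) (x k)) →
        Tendsto x atTop (nhds xl) →
        (∀ w : H, Tendsto (fun k => ⟪y k, w⟫) atTop (nhds ⟪yl, w⟫)) →
        yl ∈ Sinf xl)
    (x y : ℕ → ℝ → H) (xl yl : ℝ → H)
    (hxm : ∀ n, AEStronglyMeasurable (x n) (volume.restrict (Set.Ioc 0 T)))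
    (hym : ∀ n, AEStronglyMeasurable (y n) (volume.restrict (Set.Ioc 0 T)))
    (hxlm : AEStronglyMeasurable xl (volume.restrict (Set.Ioc 0 T)))
    (hylm : AEStronglyMeasurable yl (volume.restrict (Set.Ioc 0 T)))
    (hx2 : ∀ n, IntegrableOn (fun t => ‖x n t‖ ^ 2) (Set.Ioc 0 T))
    (hy2 : ∀ n, IntegrableOn (fun t => ‖y n t‖ ^ 2) (Set.Ioc 0 T))
    (hxl2 : IntegrableOn (fun t => ‖xl t‖ ^ 2) (Set.Ioc 0 T))
    (hyl2 : IntegrableOn (fun t => ‖yl t‖ ^ 2) (Set.Ioc 0 T))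
    (hstrong : Tendsto (fun n => ∫ t in Set.Ioc (0:ℝ) T, ‖x n t - xl t‖ ^ 2) atTop
      (nhds 0))
    (hweak : ∀ w : ℝ → H, AEStronglyMeasurable w (volume.restrict (Set.Ioc 0 T)) →
      IntegrableOn (fun t => ‖w t‖ ^ 2) (Set.Ioc 0 T) →
      Tendsto (fun n => ∫ t in Set.Ioc (0:ℝ) T, ⟪y n t, w t⟫) atTop
        (nhds (∫ t in Set.Ioc (0:ℝ) T, ⟪yl t, w t⟫)))
    (hincl : ∀ n, ∀ᵐ t ∂(volume.restrict (Set.Ioc (0:ℝ) T)), y n t ∈ S n (x n t)) :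
    ∀ᵐ t ∂(volume.restrict (Set.Ioc (0:ℝ) T)), yl t ∈ Sinf (xl t) := by
  set μ := volume.restrict (Set.Ioc (0:ℝ) T)
  have hL2 {f : ℝ → H} (hf : AEStronglyMeasurable f μ) (hf2 : Integrable (fun t => ‖f t‖ ^ 2) μ) :
      MemLp f 2 μ :=
    (memLp_two_iff_integrable_sq_norm hf).2 hf2
  set X : ℕ → Lp H 2 μ := fun n => (hL2 (hxm n) (hx2 n)).toLp (x n)
  set Y : ℕ → Lp H 2 μ := fun n => (hL2 (hym n) (hy2 n)).toLp (y n)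
  set Xl : Lp H 2 μ := (hL2 hxlm hxl2).toLp xl
  set Yl : Lp H 2 μ := (hL2 hylm hyl2).toLp yl
  have hX : Tendsto X atTop (𝓝 Xl) := by
    refine tendsto_iff_norm_sub_tendsto_zero.2 ?_
    simp only [X, Xl, ← MemLp.toLp_sub, MemLp.norm_toLp_eq_sqrt_integral]
    simpa [Function.comp_def] using (Real.continuous_sqrt.tendsto 0).comp hstrong
  have hY : WeakTendsto Y Yl := fun W => by
    simp only [Y, Yl, MemLp.inner_toLp_eq_integral]
    exact hweak W (Lp.aestronglyMeasurable W)
      ((memLp_two_iff_integrable_sq_norm (Lp.aestronglyMeasurable W)).1 (Lp.memLp W))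
  have hXY : ∀ n, ∀ᵐ t ∂μ, Y n t ∈ S n (X n t) := fun n => by
    filter_upwards [hincl n, MemLp.coeFn_toLp (hL2 (hxm n) (hx2 n)),
      MemLp.coeFn_toLp (hL2 (hym n) (hy2 n))] with t ht hxt hyt
    rwa [hxt, hyt]
  filter_upwards [ae_mem_of_tendsto_of_weakTendsto hconv hclosed hstatic hX hY hXY,
    MemLp.coeFn_toLp (hL2 hxlm hxl2), MemLp.coeFn_toLp (hL2 hylm hyl2)] with t ht hxt hyt
  rwa [hxt, hyt] at ht

/-- static strong–weak closedness upgrades to evolutionary closedness: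
let `H` be a real separable Hilbert space (identified with its dual) and
`S_n : H → P(H)` (`n ∈ ℕ`), `S_∞ : H → P(H)` with `S_∞(x)` closed and convex; assume the
subsequential static closedness: along any subsequence, `x_k → x` strongly,
`y_k ∈ S_{n_k}(x_k)`, `y_k ⇀ y` weakly imply `y ∈ S_∞(x)`.  Then: if `x_n → x_∞` in
`L²(0,T;H)`, `y_n ⇀ y_∞` in `L²(0,T;H)` and `y_n(t) ∈ S_n(x_n(t))` a.e., it follows that
`y_∞(t) ∈ S_∞(x_∞(t))` for a.e. `t ∈ (0,T)`. -/
theorem stmt17 {H : Type*} [NormedAddCommGroup H] [InnerProductSpace ℝ H]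
    [CompleteSpace H] [SecondCountableTopology H]
    (T : ℝ) (hT : 0 < T)
    (S : ℕ → H → Set H) (Sinf : H → Set H)
    (hclosed : ∀ x, IsClosed (Sinf x)) (hconv : ∀ x, Convex ℝ (Sinf x))
    (hstatic : ∀ φ : ℕ → ℕ, StrictMono φ →
      ∀ (x y : ℕ → H) (xl yl : H),
        (∀ k, y k ∈ S (φ k) (x k)) →
        Tendsto x atTop (nhds xl) →
        (∀ w : H, Tendsto (fun k => ⟪y k, w⟫) atTop (nhds ⟪yl, w⟫)) →
        yl ∈ Sinf xl)
    (x y : ℕ → ℝ → H) (xl yl : ℝ → H)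
    (hxm : ∀ n, AEStronglyMeasurable (x n) (volume.restrict (Set.Ioc 0 T)))
    (hym : ∀ n, AEStronglyMeasurable (y n) (volume.restrict (Set.Ioc 0 T)))
    (hxlm : AEStronglyMeasurable xl (volume.restrict (Set.Ioc 0 T)))
    (hylm : AEStronglyMeasurable yl (volume.restrict (Set.Ioc 0 T)))
    (hx2 : ∀ n, IntegrableOn (fun t => ‖x n t‖ ^ 2) (Set.Ioc 0 T))
    (hy2 : ∀ n, IntegrableOn (fun t => ‖y n t‖ ^ 2) (Set.Ioc 0 T))
    (hxl2 : IntegrableOn (fun t => ‖xl t‖ ^ 2) (Set.Ioc 0 T))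
    (hyl2 : IntegrableOn (fun t => ‖yl t‖ ^ 2) (Set.Ioc 0 T))
    (hstrong : Tendsto (fun n => ∫ t in Set.Ioc (0:ℝ) T, ‖x n t - xl t‖ ^ 2) atTop
      (nhds 0))
    (hweak : ∀ w : ℝ → H, AEStronglyMeasurable w (volume.restrict (Set.Ioc 0 T)) →
      IntegrableOn (fun t => ‖w t‖ ^ 2) (Set.Ioc 0 T) →
      Tendsto (fun n => ∫ t in Set.Ioc (0:ℝ) T, ⟪y n t, w t⟫) atTop
        (nhds (∫ t in Set.Ioc (0:ℝ) T, ⟪yl t, w t⟫)))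
    (hincl : ∀ n, ∀ᵐ t ∂(volume.restrict (Set.Ioc (0:ℝ) T)), y n t ∈ S n (x n t)) :
    ∀ᵐ t ∂(volume.restrict (Set.Ioc (0:ℝ) T)), yl t ∈ Sinf (xl t) :=
  stmt17_general T S Sinf hclosed hconv hstatic x y xl yl hxm hym hxlm hylm hx2 hy2 hxl2 hyl2
    hstrong hweak hincl
end
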